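/- Let 0 < α ≤ β and D ∈ ℝ. If interpolation data (z_i, v_i)_{i∈I}, (x_k, δ_k)_{k∈K} in E is interpolated by some nonempty closed convex set C that is α-strongly convex, β-smooth and has diam(C) ≤ D, then the data satisfies the conditions Interp(α, β, D; 1). -/

import Mathlib

/-!
Normalising `v i` gives a unit normal `n i` at the boundary point `z i`, so smoothness puts the
ball `B(z i - n i / β, 1 / β)` inside `C` and strong convexity puts `C` inside
`B(z i - n i / α, 1 / α)`. For `δ k ≤ 1 / β`, take a point `z` of the boundary nearest to `x k`,
at distance `ρ ≥ δ k`, and a supporting unit normal `n` at `z` (the interior of `C` is nonempty,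
by smoothness). The ball `B(x k, ρ)` lies in `C` and touches the tangent plane at `z`, so
`x k - z = -ρ • n`, and `B(x k, δ k)` lies in the smoothness ball at `z`, whose centre is `w k`;
for `δ k > 1 / β` take `w k = x k`. Each of the six conditions then says that one ball lies
inside another, or that two balls lie in a set of diameter at most `D`.
-/

open Metric Set
open scoped RealInnerProductSpace Pointwise

noncomputable section

variable {F : Type*} [NormedAddCommGroup F] [InnerProductSpace ℝ F]

/-- The normal cone of a set `C` at a point `z`. -/
def normalCone (C : Set F) (z : F) : Set F :=
  {v | ∀ x ∈ C, ⟪v, x - z⟫ ≤ 0}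

/-- A set `C` is `β`-smooth if at every boundary point `z`, every unit normal vector `n`
gives a closed ball of radius `1/β` centered at `z - (1/β) n` contained in `C`. -/
def IsSmoothSet (β : ℝ) (C : Set F) : Prop :=
  ∀ z ∈ frontier C, ∀ n ∈ normalCone C z, ‖n‖ = 1 →
    closedBall (z - (1 / β) • n) (1 / β) ⊆ C

/-- A set `C` is `α`-strongly convex if at every boundary point `z`, every unit normal
vector `n` gives a closed ball of radius `1/α` centered at `z - (1/α) n` containing `C`. -/
def IsStronglyConvexSet (α : ℝ) (C : Set F) : Prop :=
  ∀ z ∈ frontier C, ∀ n ∈ normalCone C z, ‖n‖ = 1 →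
    C ⊆ closedBall (z - (1 / α) • n) (1 / α)

/-- `diam C ≤ D`, expressed pointwise. -/
def DiamLE (C : Set F) (D : ℝ) : Prop :=
  ∀ x ∈ C, ∀ y ∈ C, ‖x - y‖ ≤ D

/-- The `δ`-interior of a set: points whose closed `δ`-ball lies inside the set. -/
def deltaInterior (δ : ℝ) (C : Set F) : Set F :=
  {x | closedBall x δ ⊆ C}

/-- The set `C` interpolates the data: `z i ∈ C` with normal vector `v i`, and
`x k` lies in the `δ k`-interior of `C`. -/
def InterpolatedBy {ι κ : Type*} (C : Set F) (z v : ι → F) (x : κ → F) (δ : κ → ℝ) : Prop :=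
  (∀ i, z i ∈ C ∧ v i ∈ normalCone C (z i)) ∧ ∀ k, x k ∈ deltaInterior (δ k) C

/-- The interpolation conditions `Interp(α, β, D; λ)`, with `n i = v i / ‖v i‖`,
`r = 1/α - 1/β` and `s k = max 0 (δ k - 1/β)`. -/
def InterpCond {ι κ : Type*} (α β D lam : ℝ) (z v : ι → F) (x : κ → F) (δ : κ → ℝ) : Prop :=
  ∃ w : κ → F,
    (∀ i j, ‖z i - (1 / α) • (‖v i‖⁻¹ • v i) - (z j - (1 / β) • (‖v j‖⁻¹ • v j))‖ ≤
      1 / α - 1 / β) ∧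
    (∀ i k, ‖z i - (1 / α) • (‖v i‖⁻¹ • v i) - w k‖ ≤
      (1 / α - 1 / β) - max 0 (δ k - 1 / β)) ∧
    (∀ k, ‖x k - w k‖ ≤ 1 / β - δ k + max 0 (δ k - 1 / β)) ∧
    (∀ i j, ‖z i - (1 / β) • (‖v i‖⁻¹ • v i) - (z j - (1 / β) • (‖v j‖⁻¹ • v j))‖ ≤
      lam * (D - 2 / β)) ∧
    (∀ i k, ‖z i - (1 / β) • (‖v i‖⁻¹ • v i) - w k‖ ≤
      lam * (D - 2 / β) - max 0 (δ k - 1 / β)) ∧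
    (∀ k l, ‖w k - w l‖ ≤ lam * (D - 2 / β) - max 0 (δ k - 1 / β) - max 0 (δ l - 1 / β))

open Filter Topology

section NormedSpace

variable {E : Type*} [NormedAddCommGroup E] [NormedSpace ℝ E]

theorem SameRay.norm_add_smul_of_norm_eq_one {a u : E} (h : SameRay ℝ a u) (hu : ‖u‖ = 1)
    {t : ℝ} (ht : 0 ≤ t) : ‖a + t • u‖ = ‖a‖ + t := by
  rw [(h.nonneg_smul_right ht).norm_add, norm_smul, hu, mul_one, Real.norm_of_nonneg ht]

variable [Nontrivial E]

theorem exists_norm_eq_one_sameRay (a : E) : ∃ u : E, ‖u‖ = 1 ∧ SameRay ℝ a u := by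
  rcases eq_or_ne a 0 with rfl | ha
  · obtain ⟨u, hu⟩ := exists_norm_eq E zero_le_one
    exact ⟨u, hu, SameRay.zero_left u⟩
  · exact ⟨‖a‖⁻¹ • a, norm_smul_inv_norm ha, SameRay.sameRay_nonneg_smul_right a (by positivity)⟩

theorem add_dist_le_of_closedBall_subset_closedBall {p q : E} {r R : ℝ} (hr : 0 ≤ r)
    (h : closedBall p r ⊆ closedBall q R) : r + dist p q ≤ R := by
  obtain ⟨u, hu, hpu⟩ := exists_norm_eq_one_sameRay (p - q)
  have hmem : p + r • u ∈ closedBall p r := by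
    simp [norm_smul, hu, abs_of_nonneg hr]
  have hR := mem_closedBall_iff_norm.1 (h hmem)
  rw [add_sub_right_comm, hpu.norm_add_smul_of_norm_eq_one hu hr, ← dist_eq_norm] at hR
  linarith

theorem DiamLE.add_dist_add_le {C : Set E} {D : ℝ} (hC : DiamLE C D) {p q : E} {r₁ r₂ : ℝ}
    (hr₁ : 0 ≤ r₁) (hr₂ : 0 ≤ r₂) (hp : closedBall p r₁ ⊆ C) (hq : closedBall q r₂ ⊆ C) :
    r₁ + dist p q + r₂ ≤ D := by
  obtain ⟨u, hu, hpu⟩ := exists_norm_eq_one_sameRay (p - q)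
  have hpC : p + r₁ • u ∈ C := hp (by simp [norm_smul, hu, abs_of_nonneg hr₁])
  have hqC : q - r₂ • u ∈ C := hq (by simp [norm_smul, hu, abs_of_nonneg hr₂])
  have hD := hC _ hpC _ hqC
  rw [show p + r₁ • u - (q - r₂ • u) = p - q + (r₁ + r₂) • u by rw [add_smul]; abel,
    hpu.norm_add_smul_of_norm_eq_one hu (add_nonneg hr₁ hr₂), ← dist_eq_norm] at hD
  linarith

end NormedSpace

theorem smul_mem_normalCone {C : Set F} {z v : F} (hv : v ∈ normalCone C z) {c : ℝ}
    (hc : 0 ≤ c) : c • v ∈ normalCone C z := fun x hx => by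
  rw [real_inner_smul_left]
  exact mul_nonpos_of_nonneg_of_nonpos hc (hv x hx)

theorem mem_frontier_of_mem_normalCone {C : Set F} {z v : F} (hz : z ∈ C) (hv₀ : v ≠ 0)
    (hv : v ∈ normalCone C z) : z ∈ frontier C := by
  refine ⟨subset_closure hz, fun hzi => ?_⟩
  have hline : Tendsto (fun t : ℝ => z + t • v) (𝓝[>] 0) (𝓝 z) := by
    refine tendsto_nhdsWithin_of_tendsto_nhds ?_
    simpa using ((continuous_id.smul continuous_const).const_add z).tendsto (0 : ℝ)
  obtain ⟨t, htC, ht⟩ :=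
    ((hline.eventually (mem_interior_iff_mem_nhds.1 hzi)).and self_mem_nhdsWithin).exists
  have hle := hv _ htC
  rw [add_sub_cancel_left, real_inner_smul_right, real_inner_self_eq_norm_sq] at hle
  have : 0 < t * ‖v‖ ^ 2 := mul_pos ht (by positivity)
  linarith

theorem IsSmoothSet.closedBall_subset {β : ℝ} {C : Set F} (hC : IsSmoothSet β C) {z v : F}
    (hz : z ∈ C) (hv₀ : v ≠ 0) (hv : v ∈ normalCone C z) :
    closedBall (z - (1 / β) • (‖v‖⁻¹ • v)) (1 / β) ⊆ C :=
  hC z (mem_frontier_of_mem_normalCone hz hv₀ hv) _ (smul_mem_normalCone hv (by positivity))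
    (norm_smul_inv_norm hv₀)

theorem IsStronglyConvexSet.subset_closedBall {α : ℝ} {C : Set F} (hC : IsStronglyConvexSet α C)
    {z v : F} (hz : z ∈ C) (hv₀ : v ≠ 0) (hv : v ∈ normalCone C z) :
    C ⊆ closedBall (z - (1 / α) • (‖v‖⁻¹ • v)) (1 / α) :=
  hC z (mem_frontier_of_mem_normalCone hz hv₀ hv) _ (smul_mem_normalCone hv (by positivity))
    (norm_smul_inv_norm hv₀)

theorem exists_sub_mem_normalCone_of_notMem [CompleteSpace F] {C : Set F} (hne : C.Nonempty)
    (hcl : IsClosed C) (hcv : Convex ℝ C) {y : F} (hy : y ∉ C) :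
    ∃ p ∈ C, y - p ≠ 0 ∧ y - p ∈ normalCone C p := by
  obtain ⟨p, hp, hmin⟩ := exists_norm_eq_iInf_of_complete_convex hne hcl.isComplete hcv y
  exact ⟨p, hp, sub_ne_zero.2 fun h => hy (h ▸ hp),
    (norm_eq_iInf_iff_real_inner_le_zero hcv hp).1 hmin⟩

theorem IsSmoothSet.interior_nonempty [CompleteSpace F] {β : ℝ} {C : Set F}
    (hC : IsSmoothSet β C) (hβ : 0 < β) (hne : C.Nonempty) (hcl : IsClosed C)
    (hcv : Convex ℝ C) {y : F} (hy : y ∉ C) : (interior C).Nonempty := by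
  obtain ⟨p, hp, hv₀, hv⟩ := exists_sub_mem_normalCone_of_notMem hne hcl hcv hy
  have hball := hC.closedBall_subset hp hv₀ hv
  exact ⟨_, isOpen_ball.subset_interior_iff.2 (ball_subset_closedBall.trans hball)
    (mem_ball_self (by positivity))⟩

theorem Convex.exists_norm_eq_one_mem_normalCone [CompleteSpace F] {C : Set F}
    (hcv : Convex ℝ C) (hint : (interior C).Nonempty) {z : F} (hz : z ∈ frontier C) :
    ∃ n : F, ‖n‖ = 1 ∧ n ∈ normalCone C z := by
  obtain ⟨f, u, hf₀, hfC, hfz⟩ := geometric_hahn_banach_of_nonempty_interior hcv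
    (convex_singleton z) (disjoint_singleton_right.2 hz.2) hint (singleton_nonempty z)
  set v := (InnerProductSpace.toDual ℝ F).symm f
  have hv₀ : v ≠ 0 := by simpa [v] using hf₀
  refine ⟨‖v‖⁻¹ • v, norm_smul_inv_norm hv₀, smul_mem_normalCone (fun c hc => ?_) (by positivity)⟩
  rw [InnerProductSpace.toDual_symm_apply, map_sub]
  linarith [hfC c hc, hfz z rfl]

theorem norm_add_smul_le_of_inner_le_neg {a n : F} {R : ℝ} (hn : ‖n‖ = 1) (hR : ‖a‖ ≤ R)
    (h : ⟪n, a⟫ ≤ -‖a‖) : ‖a + R • n‖ ≤ R - ‖a‖ := by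
  have hsq : ‖a + R • n‖ ^ 2 ≤ (R - ‖a‖) ^ 2 := by
    rw [norm_add_sq_real, real_inner_smul_right, real_inner_comm, norm_smul, hn,
      Real.norm_of_nonneg ((norm_nonneg a).trans hR)]
    nlinarith [norm_nonneg a]
  exact (pow_le_pow_iff_left₀ (norm_nonneg _) (by linarith) two_ne_zero).1 hsq

theorem IsSmoothSet.exists_closedBall_subset [ProperSpace F] {β : ℝ} {C : Set F}
    (hC : IsSmoothSet β C) (hβ : 0 < β) (hcl : IsClosed C) (hcv : Convex ℝ C) {x : F} {δ : ℝ}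
    (hδ : 0 ≤ δ) (hδβ : δ ≤ 1 / β) (hx : closedBall x δ ⊆ C) :
    ∃ w, dist x w + δ ≤ 1 / β ∧ closedBall w (1 / β) ⊆ C := by
  by_cases hxβ : closedBall x (1 / β) ⊆ C
  · exact ⟨x, by simpa using hδβ, hxβ⟩
  obtain ⟨y, hyx, hy⟩ := not_subset.1 hxβ
  have hCc : Cᶜ.Nonempty := ⟨y, hy⟩
  have hxC : x ∈ C := hx (mem_closedBall_self hδ)
  obtain ⟨z, hz, hxz⟩ := exists_mem_closure_infDist_eq_dist hCc x
  set ρ := infDist x Cᶜ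
  have hρβ : ρ ≤ 1 / β := (infDist_le_dist_of_mem hy).trans (by simpa [dist_comm] using hyx)
  have hδρ : δ ≤ ρ := by
    by_contra! hρδ
    obtain ⟨y', hy', hxy'⟩ := (infDist_lt_iff hCc).1 hρδ
    exact hy' (hx (mem_closedBall'.2 hxy'.le))
  have hballρ : closedBall x ρ ⊆ C := hcl.closure_eq ▸ closedBall_infDist_compl_subset_closure hxC
  have hzC : z ∈ C := hballρ (mem_closedBall'.2 hxz.ge)
  have hzfr : z ∈ frontier C := by
    rw [frontier_eq_closure_inter_closure]
    exact ⟨subset_closure hzC, hz⟩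
  obtain ⟨n, hn, hnC⟩ := hcv.exists_norm_eq_one_mem_normalCone
    (hC.interior_nonempty hβ ⟨x, hxC⟩ hcl hcv hy) hzfr
  have hxz' : ‖x - z‖ = ρ := by rw [← dist_eq_norm, hxz]
  have hinner : ⟪n, x - z⟫ ≤ -ρ := by
    have := hnC _ (hballρ (show x + ρ • n ∈ closedBall x ρ by
      simp [norm_smul, hn, abs_of_nonneg (hδ.trans hδρ)]))
    rw [add_sub_right_comm, inner_add_right, real_inner_smul_right, real_inner_self_eq_norm_sq,
      hn] at this
    linarith
  refine ⟨z - (1 / β) • n, ?_, hC z hzfr n hnC hn⟩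
  calc dist x (z - (1 / β) • n) + δ = ‖x - z + (1 / β) • n‖ + δ := by
        rw [dist_eq_norm, sub_sub_eq_add_sub, add_sub_right_comm]
    _ ≤ 1 / β - ρ + δ := by
        grw [norm_add_smul_le_of_inner_le_neg hn (hxz' ▸ hρβ) (hxz' ▸ hinner), hxz']
    _ ≤ 1 / β := by linarith

theorem IsSmoothSet.exists_closedBall_max_subset [ProperSpace F] {β : ℝ} {C : Set F}
    (hC : IsSmoothSet β C) (hβ : 0 < β) (hcl : IsClosed C) (hcv : Convex ℝ C) {x : F} {δ : ℝ}
    (hδ : 0 ≤ δ) (hx : closedBall x δ ⊆ C) :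
    ∃ w, dist x w + δ ≤ max δ (1 / β) ∧ closedBall w (max δ (1 / β)) ⊆ C := by
  rcases le_total δ (1 / β) with h | h
  · rw [max_eq_right h]
    exact hC.exists_closedBall_subset hβ hcl hcv hδ h hx
  · exact ⟨x, by simp, by rwa [max_eq_left h]⟩

theorem interpolation_necessary_general {d : ℕ} (hd : 1 ≤ d) {ι κ : Type*}
    (α β D : ℝ) (hα : 0 < α) (hαβ : α ≤ β)
    (z v : ι → EuclideanSpace ℝ (Fin d)) (hv : ∀ i, v i ≠ 0)
    (x : κ → EuclideanSpace ℝ (Fin d)) (δ : κ → ℝ) (hδ : ∀ k, 0 ≤ δ k)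
    (C : Set (EuclideanSpace ℝ (Fin d))) (hcl : IsClosed C)
    (hcv : Convex ℝ C) (hsc : IsStronglyConvexSet α C) (hsm : IsSmoothSet β C)
    (hdiam : DiamLE C D) (hint : InterpolatedBy C z v x δ) :
    InterpCond α β D 1 z v x δ := by
  have : Nonempty (Fin d) := ⟨⟨0, hd⟩⟩
  have hβ : 0 < β := hα.trans_le hαβ
  have hinner i := hsm.closedBall_subset (hint.1 i).1 (hv i) (hint.1 i).2
  have houter i := hsc.subset_closedBall (hint.1 i).1 (hv i) (hint.1 i).2
  choose w hxw hw using fun k => hsm.exists_closedBall_max_subset hβ hcl hcv (hδ k) (hint.2 k)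
  have hs k : max (δ k) (1 / β) = 1 / β + max 0 (δ k - 1 / β) := by
    rw [← max_add_add_left, add_zero, add_sub_cancel, max_comm]
  simp only [hs] at hxw hw
  have h2β : 2 / β = 1 / β + 1 / β := by ring
  refine ⟨w, fun i j => ?_, fun i k => ?_, fun k => ?_, fun i j => ?_, fun i k => ?_, fun k l => ?_⟩
  · have := add_dist_le_of_closedBall_subset_closedBall (by positivity) ((hinner j).trans (houter i))
    rw [dist_eq_norm'] at this; linarith
  · have := add_dist_le_of_closedBall_subset_closedBall (by positivity) ((hw k).trans (houter i))
    rw [dist_eq_norm'] at this; linarith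
  · have := hxw k
    rw [dist_eq_norm] at this; linarith
  · have := hdiam.add_dist_add_le (by positivity) (by positivity) (hinner i) (hinner j)
    rw [dist_eq_norm] at this; linarith
  · have := hdiam.add_dist_add_le (by positivity) (by positivity) (hinner i) (hw k)
    rw [dist_eq_norm] at this; linarith
  · have := hdiam.add_dist_add_le (by positivity) (by positivity) (hw k) (hw l)
    rw [dist_eq_norm] at this; linarith

/-- Necessity of the interpolation conditions: if the data is interpolated by a nonempty
closed convex set that is `α`-strongly convex, `β`-smooth and has diameter at most `D`,
then the data satisfies `Interp(α, β, D; 1)`. -/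
theorem interpolation_necessary {d : ℕ} (hd : 1 ≤ d) {ι κ : Type*} [Fintype ι] [Fintype κ]
    (α β D : ℝ) (hα : 0 < α) (hαβ : α ≤ β)
    (z v : ι → EuclideanSpace ℝ (Fin d)) (hv : ∀ i, v i ≠ 0)
    (x : κ → EuclideanSpace ℝ (Fin d)) (δ : κ → ℝ) (hδ : ∀ k, 0 ≤ δ k)
    (C : Set (EuclideanSpace ℝ (Fin d))) (hne : C.Nonempty) (hcl : IsClosed C)
    (hcv : Convex ℝ C) (hsc : IsStronglyConvexSet α C) (hsm : IsSmoothSet β C)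
    (hdiam : DiamLE C D) (hint : InterpolatedBy C z v x δ) :
    InterpCond α β D 1 z v x δ :=
  interpolation_necessary_general hd α β D hα hαβ z v hv x δ hδ C hcl hcv hsc hsm hdiam hint
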